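/- arXiv:2203.01966 — 4 statements merged into one kernel-verified Lean document; each statement's English description precedes it below -/
import Mathlib

section
/- Let ρ : ℝ → ℝ, Ḡ : ℝ × ℝ → ℝ, and suppose u : ℝ × ℝ → ℝ is a smooth function such that ρ(t)·D_t^α u(x,t) = ∂_t Ḡ(x,t) for all (x,t), where D_t^α u is a given smooth function of (x,t) (the fractional derivative of u). Let K : ℝ × ℝ → ℝ be smooth and q ≥ 1. Then for each k = 0, …, q-1, the quantity x^k ρ(t)(D_t^α u - ∂_x^q K) can be written as a total divergence ∂_x F + ∂_t G with G(x,t) = x^k Ḡ(x,t) and F(x,t) = Σ_{ℓ=0}^{k} (-1)^{ℓ+1} (k!/(k-ℓ)!) x^{k-ℓ} ∂_x^{q-1-ℓ}(ρ(t) K(x,t)). -/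
private lemma iter_const_mul (c : ℝ) (f : ℝ → ℝ) (n : ℕ) :
    iteratedDeriv n (fun z => c * f z) = fun x => c * iteratedDeriv n f x := by
  induction n with
  | zero => simp [iteratedDeriv_zero]
  | succ n ih =>
    funext x
    rw [iteratedDeriv_succ, ih, iteratedDeriv_succ]
    exact deriv_const_mul_field c

private lemma key_deriv (g : ℝ → ℝ) (hg : ContDiff ℝ (⊤ : ℕ∞) g) (q : ℕ) (hq : 1 ≤ q)
    (k : ℕ) (hk : k ≤ q - 1) (x : ℝ) :
    HasDerivAt (fun y => ∑ ℓ ∈ Finset.range (k+1),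
        (-1:ℝ)^(ℓ+1) * ((Nat.factorial k : ℝ) / (Nat.factorial (k - ℓ))) * y^(k-ℓ) *
          iteratedDeriv (q-1-ℓ) g y)
      (- (x^k * iteratedDeriv q g x)) x := by
  set c : ℕ → ℝ := fun ℓ => (-1:ℝ)^(ℓ+1) * ((Nat.factorial k : ℝ) / (Nat.factorial (k - ℓ)))
    with hc
  set f : ℕ → ℝ := fun ℓ => c ℓ * x^(k-ℓ) * iteratedDeriv (q-ℓ) g x with hf
  have hder : ∀ ℓ ∈ Finset.range (k+1),
      HasDerivAt (fun y => c ℓ * y^(k-ℓ) * iteratedDeriv (q-1-ℓ) g y)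
        (c ℓ * (((k-ℓ : ℕ):ℝ) * x^(k-ℓ-1)) * iteratedDeriv (q-1-ℓ) g x + f ℓ) x := by
    intro ℓ hℓ
    have hℓk : ℓ ≤ k := Nat.lt_succ_iff.mp (Finset.mem_range.mp hℓ)
    have h1 : HasDerivAt (fun y : ℝ => c ℓ * y^(k-ℓ)) (c ℓ * (((k-ℓ : ℕ):ℝ) * x^(k-ℓ-1))) x :=
      (hasDerivAt_pow (k-ℓ) x).const_mul (c ℓ)
    have h2 : HasDerivAt (iteratedDeriv (q-1-ℓ) g) (iteratedDeriv (q-ℓ) g x) x := by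
      have hd : Differentiable ℝ (iteratedDeriv (q-1-ℓ) g) := by
        apply hg.differentiable_iteratedDeriv
        exact lt_of_lt_of_le (WithTop.coe_lt_coe.mpr (ENat.coe_lt_top (q-1-ℓ))) le_rfl
      have := (hd x).hasDerivAt
      have heq : deriv (iteratedDeriv (q-1-ℓ) g) x = iteratedDeriv (q-ℓ) g x := by
        rw [← iteratedDeriv_succ]
        congr 1
        omega
      rwa [heq] at this
    simpa [hf, mul_assoc] using h1.fun_mul h2
  have hsum : HasDerivAt (fun y => ∑ ℓ ∈ Finset.range (k+1), c ℓ * y^(k-ℓ) * iteratedDeriv (q-1-ℓ) g y)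
      (∑ ℓ ∈ Finset.range (k+1), (c ℓ * (((k-ℓ : ℕ):ℝ) * x^(k-ℓ-1)) * iteratedDeriv (q-1-ℓ) g x + f ℓ)) x :=
    HasDerivAt.fun_sum hder
  convert hsum using 1
  -- algebra: telescoping
  have hA : ∀ ℓ < k, c ℓ * (((k-ℓ : ℕ):ℝ) * x^(k-ℓ-1)) * iteratedDeriv (q-1-ℓ) g x
      = - f (ℓ+1) := by
    intro ℓ hℓ
    have h1 : q - 1 - ℓ = q - (ℓ+1) := by omega
    have h2 : k - ℓ - 1 = k - (ℓ+1) := by omega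
    have h3 : (k - ℓ).factorial = (k - ℓ) * (k - (ℓ+1)).factorial := by
      rw [show k - ℓ = (k - (ℓ+1)) + 1 by omega, Nat.factorial_succ]
    have hne : ((k - ℓ : ℕ) : ℝ) ≠ 0 := by
      have : 0 < k - ℓ := by omega
      positivity
    have hfac : ((k - (ℓ+1)).factorial : ℝ) ≠ 0 := by positivity
    simp only [hf, hc, h1, h2, h3]
    push_cast
    field_simp
    ring
  have hlast : c k * (((k-k : ℕ):ℝ) * x^(k-k-1)) * iteratedDeriv (q-1-k) g x = 0 := by
    simp
  rw [Finset.sum_add_distrib, Finset.sum_range_succ _ k, hlast, add_zero,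
    Finset.sum_congr rfl (fun ℓ hℓ => hA ℓ (Finset.mem_range.mp hℓ))]
  have : ∑ ℓ ∈ Finset.range k, -f (ℓ+1) = -(∑ ℓ ∈ Finset.range (k+1), f ℓ - f 0) := by
    rw [Finset.sum_range_succ' f k, Finset.sum_neg_distrib]
    ring
  rw [this]
  have hfac1 : ((k.factorial : ℕ):ℝ) / ((k.factorial : ℕ):ℝ) = 1 := div_self (by positivity)
  have hf0 : f 0 = - (x^k * iteratedDeriv q g x) := by
    simp [hf, hc, hfac1]
  linarith [hf0]

/-- Sufficient condition for continuous conservation laws: if `ρ(t) D_t^α u = ∂_t Ḡ`, then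
`x^k ρ(t)(D_t^α u - ∂_x^q K)` is a total divergence `∂_x F + ∂_t G`. -/
theorem continuous_conservation_law (ρ : ℝ → ℝ) (Gbar Dα K : ℝ → ℝ → ℝ)
    (hK : ∀ t, ContDiff ℝ (⊤ : ℕ∞) (fun x => K x t))
    (hG : ∀ x t, deriv (fun s => Gbar x s) t = ρ t * Dα x t)
    (q : ℕ) (hq : 1 ≤ q) (k : ℕ) (hk : k ≤ q - 1) (x t : ℝ) :
    x^k * ρ t * (Dα x t - iteratedDeriv q (fun y => K y t) x) =
      deriv (fun y => ∑ ℓ ∈ Finset.range (k+1),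
        (-1:ℝ)^(ℓ+1) * ((Nat.factorial k : ℝ) / (Nat.factorial (k - ℓ))) * y^(k-ℓ) *
          iteratedDeriv (q-1-ℓ) (fun z => ρ t * K z t) y) x +
      deriv (fun s => x^k * Gbar x s) t := by
  have hg : ContDiff ℝ (⊤ : ℕ∞) (fun z => ρ t * K z t) := contDiff_const.mul (hK t)
  have h1 := (key_deriv _ hg q hq k hk x).deriv
  rw [h1]
  have h2 : deriv (fun s => x^k * Gbar x s) t = x^k * (ρ t * Dα x t) := by
    rw [deriv_const_mul_field, hG]
  rw [h2, iter_const_mul]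
  ring
end

section
/- Under the same hypotheses as the first discrete conservation law (u_{i,j} solves D_{Δt}^α u_{i,j} = D^{(2)}_{Δx} K(u_{i,j}) on a uniform grid x_i = a + iΔx), define G̃₂(i,j) = x_i·G̃₁(i,j) with G̃₁(i,j) = Δt Σ_{ℓ=0}^{j-1} D_{Δt}^α u_{i,ℓ}, and F̃₂(i,j) = (x_i K(u_{i-1,j}) - x_{i-1} K(u_{i,j}))/Δx. Then D_{Δx}(i ↦ F̃₂(i,j))(i) + D_{Δt}(j ↦ G̃₂(i,j))(j) = 0 at every interior grid point (i,j). -/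
/-!
On the uniform grid `x (i + 1) + x (i - 1) = 2 * x i`, so the `Δx`-difference of the flux
`F̃₂(i) = (x_i K_{i-1} - x_{i-1} K_i) / Δx` telescopes to `-x_i D^{(2)}_{Δx} K(u)(i)`, while the
`Δt`-difference of `G̃₂ = x_i Δt Σ_{ℓ<j} D^α_{Δt} u_{i,ℓ}` is `x_i D^α_{Δt} u_{i,j}`.
The scheme says these two cancel.
-/

open Finset

/-- The discrete flux `F̃₂` of the scheme, for a grid function `k = K ∘ u`. -/
noncomputable def momentFlux (a Δx : ℝ) (k : ℤ → ℝ) (m : ℤ) : ℝ :=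
  ((a + m * Δx) * k (m - 1) - (a + (m - 1) * Δx) * k m) / Δx

noncomputable def leftRiemannSum (Δt : ℝ) (g : ℕ → ℝ) (n : ℕ) : ℝ :=
  Δt * ∑ ℓ ∈ range n, g ℓ

theorem momentFlux_fwdQuot (a Δx : ℝ) (k : ℤ → ℝ) (i : ℤ) :
    (momentFlux a Δx k (i + 1) - momentFlux a Δx k i) / Δx =
      -(a + i * Δx) * ((k (i + 1) - 2 * k i + k (i - 1)) / Δx ^ 2) := by
  simp only [momentFlux, add_sub_cancel_right, Int.cast_add, Int.cast_one]
  ring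

theorem leftRiemannSum_fwdQuot {Δt : ℝ} (hΔt : Δt ≠ 0) (c : ℝ) (g : ℕ → ℝ) (j : ℕ) :
    (c * leftRiemannSum Δt g (j + 1) - c * leftRiemannSum Δt g j) / Δt = c * g j := by
  rw [leftRiemannSum, leftRiemannSum, sum_range_succ]
  field_simp
  ring

theorem second_discrete_conservation_law_general (a Δx Δt : ℝ) (hΔt : 0 < Δt)
    (K : ℝ → ℝ) (u Dα : ℤ → ℕ → ℝ)
    (hscheme : ∀ i j, Dα i j = (K (u (i+1) j) - 2*K (u i j) + K (u (i-1) j)) / Δx^2)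
    (i : ℤ) (j : ℕ) :
    ((fun (m : ℤ) => ((a + (m:ℝ)*Δx) * K (u (m-1) j) - (a + ((m:ℝ)-1)*Δx) * K (u m j)) / Δx) (i+1) -
     (fun (m : ℤ) => ((a + (m:ℝ)*Δx) * K (u (m-1) j) - (a + ((m:ℝ)-1)*Δx) * K (u m j)) / Δx) i) / Δx +
    ((fun n => (a + (i:ℝ)*Δx) * (Δt * ∑ ℓ ∈ Finset.range n, Dα i ℓ)) (j+1) -
     (fun n => (a + (i:ℝ)*Δx) * (Δt * ∑ ℓ ∈ Finset.range n, Dα i ℓ)) j) / Δt = 0 := by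
  calc _ = -(a + i * Δx) * Dα i j + (a + i * Δx) * Dα i j :=
        congrArg₂ (· + ·)
          ((momentFlux_fwdQuot a Δx (fun m => K (u m j)) i).trans (by rw [hscheme]))
          (leftRiemannSum_fwdQuot hΔt.ne' (a + i * Δx) (Dα i) j)
    _ = 0 := by ring

/-- Second discrete conservation law of the scheme
`D_{Δt}^α u_{i,j} = D^{(2)}_{Δx} K(u_{i,j})` on the uniform grid `x_i = a + iΔx`. -/
theorem second_discrete_conservation_law (a Δx Δt : ℝ) (hΔx : 0 < Δx) (hΔt : 0 < Δt)
    (K : ℝ → ℝ) (u Dα : ℤ → ℕ → ℝ)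
    (hscheme : ∀ i j, Dα i j = (K (u (i+1) j) - 2*K (u i j) + K (u (i-1) j)) / Δx^2)
    (i : ℤ) (j : ℕ) :
    ((fun (m : ℤ) => ((a + (m:ℝ)*Δx) * K (u (m-1) j) - (a + ((m:ℝ)-1)*Δx) * K (u m j)) / Δx) (i+1) -
     (fun (m : ℤ) => ((a + (m:ℝ)*Δx) * K (u (m-1) j) - (a + ((m:ℝ)-1)*Δx) * K (u m j)) / Δx) i) / Δx +
    ((fun n => (a + (i:ℝ)*Δx) * (Δt * ∑ ℓ ∈ Finset.range n, Dα i ℓ)) (j+1) -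
     (fun n => (a + (i:ℝ)*Δx) * (Δt * ∑ ℓ ∈ Finset.range n, Dα i ℓ)) j) / Δt = 0 :=
  second_discrete_conservation_law_general a Δx Δt hΔt K u Dα hscheme i j
end

section
/- Let u_{i,j} solve D_{Δt}^α u_{i,j} = D^{(2)}_{Δx} K(u_{i,j}) on uniform grids x_i = a + iΔx, t_j = t₀ + jΔt. Define G̃₁(i,j) = Δt Σ_{ℓ=0}^{j-1} D_{Δt}^α u_{i,ℓ}, G̃₃(i,j) = t_j G̃₁(i,j) - Δt Σ_{r=0}^{j} G̃₁(i,r), and F̃₃(i,j) = -t_j (K(u_{i,j}) - K(u_{i-1,j}))/Δx. Then D_{Δx}(i ↦ F̃₃(i,j))(i) + D_{Δt}(j ↦ G̃₃(i,j))(j) = 0 at every interior grid point (i,j). -/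
/-- Discrete density `G̃₁(i,j) = Δt Σ_{ℓ=0}^{j-1} D_{Δt}^α u_{i,ℓ}`. -/
noncomputable def G1tilde (Δt : ℝ) (Dα : ℤ → ℕ → ℝ) (i : ℤ) (j : ℕ) : ℝ :=
  Δt * ∑ ℓ ∈ Finset.range j, Dα i ℓ

/-- Discrete density `G̃₃(i,j) = t_j G̃₁(i,j) - Δt Σ_{r=0}^{j} G̃₁(i,r)` on the grid
`t_j = t₀ + jΔt`. -/
noncomputable def G3tilde (t₀ Δt : ℝ) (Dα : ℤ → ℕ → ℝ) (i : ℤ) (j : ℕ) : ℝ :=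
  (t₀ + (j:ℝ)*Δt) * G1tilde Δt Dα i j - Δt * ∑ r ∈ Finset.range (j+1), G1tilde Δt Dα i r

/-- Discrete flux `F̃₃(i,j) = -t_j (K(u_{i,j}) - K(u_{i-1,j}))/Δx`. -/
noncomputable def F3tilde (t₀ Δt Δx : ℝ) (K : ℝ → ℝ) (u : ℤ → ℕ → ℝ) (i : ℤ) (j : ℕ) : ℝ :=
  -(t₀ + (j:ℝ)*Δt) * (K (u i j) - K (u (i-1) j)) / Δx

/-! The time difference of `t G̃₁ - Δt Σ G̃₁` is `t_j` times the time difference of `G̃₁`, that is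
`t_j Dα`, while the space difference of `F̃₃` is `-t_j` times the second difference of `K(u)`,
which the scheme identifies with `Dα`: the two cancel. -/

theorem time_mul_sub_sum_succ_sub (t₀ Δt : ℝ) (g : ℕ → ℝ) (j : ℕ) :
    ((t₀ + ((j + 1 : ℕ) : ℝ) * Δt) * g (j + 1) - Δt * ∑ r ∈ Finset.range (j + 1 + 1), g r) -
      ((t₀ + (j : ℝ) * Δt) * g j - Δt * ∑ r ∈ Finset.range (j + 1), g r) =
      (t₀ + (j : ℝ) * Δt) * (g (j + 1) - g j) := by
  rw [Finset.sum_range_succ _ (j + 1)]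
  push_cast
  ring

theorem G1tilde_succ_sub (Δt : ℝ) (Dα : ℤ → ℕ → ℝ) (i : ℤ) (j : ℕ) :
    G1tilde Δt Dα i (j + 1) - G1tilde Δt Dα i j = Δt * Dα i j := by
  rw [G1tilde, G1tilde, Finset.sum_range_succ]
  ring

theorem G3tilde_succ_sub (t₀ Δt : ℝ) (Dα : ℤ → ℕ → ℝ) (i : ℤ) (j : ℕ) :
    G3tilde t₀ Δt Dα i (j + 1) - G3tilde t₀ Δt Dα i j = (t₀ + (j : ℝ) * Δt) * (Δt * Dα i j) := by
  rw [G3tilde, G3tilde, time_mul_sub_sum_succ_sub, G1tilde_succ_sub]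

theorem F3tilde_succ_sub (t₀ Δt Δx : ℝ) (K : ℝ → ℝ) (u : ℤ → ℕ → ℝ) (i : ℤ) (j : ℕ) :
    F3tilde t₀ Δt Δx K u (i + 1) j - F3tilde t₀ Δt Δx K u i j =
      -(t₀ + (j : ℝ) * Δt) * (K (u (i + 1) j) - 2 * K (u i j) + K (u (i - 1) j)) / Δx := by
  rw [F3tilde, F3tilde, add_sub_cancel_right]
  ring

theorem third_discrete_conservation_law_general (t₀ Δx Δt : ℝ) (hΔt : 0 < Δt)
    (K : ℝ → ℝ) (u Dα : ℤ → ℕ → ℝ)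
    (hscheme : ∀ i j, Dα i j = (K (u (i+1) j) - 2*K (u i j) + K (u (i-1) j)) / Δx^2)
    (i : ℤ) (j : ℕ) :
    (F3tilde t₀ Δt Δx K u (i+1) j - F3tilde t₀ Δt Δx K u i j) / Δx +
    (G3tilde t₀ Δt Dα i (j+1) - G3tilde t₀ Δt Dα i j) / Δt = 0 := by
  have hflux : (F3tilde t₀ Δt Δx K u (i+1) j - F3tilde t₀ Δt Δx K u i j) / Δx =
      -(t₀ + (j : ℝ) * Δt) * Dα i j := by
    rw [F3tilde_succ_sub, hscheme, div_div, ← sq, mul_div_assoc]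
  have hdensity : (G3tilde t₀ Δt Dα i (j+1) - G3tilde t₀ Δt Dα i j) / Δt =
      (t₀ + (j : ℝ) * Δt) * Dα i j := by
    rw [G3tilde_succ_sub, mul_left_comm, mul_div_cancel_left₀ _ hΔt.ne']
  rw [hflux, hdensity]
  ring

/-- Third discrete conservation law of the superdiffusion scheme. -/
theorem third_discrete_conservation_law (a t₀ Δx Δt : ℝ) (hΔx : 0 < Δx) (hΔt : 0 < Δt)
    (K : ℝ → ℝ) (u Dα : ℤ → ℕ → ℝ)
    (hscheme : ∀ i j, Dα i j = (K (u (i+1) j) - 2*K (u i j) + K (u (i-1) j)) / Δx^2)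
    (i : ℤ) (j : ℕ) :
    (F3tilde t₀ Δt Δx K u (i+1) j - F3tilde t₀ Δt Δx K u i j) / Δx +
    (G3tilde t₀ Δt Dα i (j+1) - G3tilde t₀ Δt Dα i j) / Δt = 0 :=
  third_discrete_conservation_law_general t₀ Δx Δt hΔt K u Dα hscheme i j
end

section
/- Let ρ(t_j) be given reals and Ḡ(i,j) reals such that ρ(t_j)·D_{Δt}^α u_{i,j} = D_{Δt}(j ↦ Ḡ(i,j))(j) for all i,j, where u_{i,j} solves the scheme D_{Δt}^α u_{i,j} = D^{(2)}_{Δx} K̃(u_{i,j}) on a uniform grid x_i = a + iΔx. Then for k = 0 and k = 1, there exists a discrete flux F̃(i,j) (explicitly, obtained by the discrete Leibniz rule for D^{(2)}_{Δx}) such that x_i^k ρ(t_j)(D_{Δt}^α u_{i,j} - D^{(2)}_{Δx} K̃(u_{i,j})) = D_{Δt}(j ↦ x_i^k Ḡ(i,j))(j) + D_{Δx}(i ↦ F̃(i,j))(i), and hence this quantity—which vanishes on solutions—is a discrete total divergence. -/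
/-- Discrete sufficient-condition theorem (case `q = 2`): if `ρ(t_j) D_{Δt}^α u = D_{Δt} Ḡ`,
then for `k = 0, 1` the quantity `x_i^k ρ(t_j)(D_{Δt}^α u - D^{(2)}_{Δx} K̃(u))` is a
discrete total divergence. -/
theorem discrete_conservation_law_sufficient_condition (a Δx Δt : ℝ)
    (hΔx : 0 < Δx) (hΔt : 0 < Δt) (Ktilde : ℝ → ℝ) (u Dα : ℤ → ℕ → ℝ)
    (ρ : ℕ → ℝ) (Gbar : ℤ → ℕ → ℝ)
    (hscheme : ∀ i j, Dα i j = (Ktilde (u (i+1) j) - 2*Ktilde (u i j) + Ktilde (u (i-1) j)) / Δx^2)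
    (hG : ∀ i j, ρ j * Dα i j = (Gbar i (j+1) - Gbar i j) / Δt)
    (k : ℕ) (hk : k ≤ 1) :
    ∃ F : ℤ → ℕ → ℝ, ∀ (i : ℤ) (j : ℕ),
      (a + (i:ℝ)*Δx)^k * ρ j *
          (Dα i j - (Ktilde (u (i+1) j) - 2*Ktilde (u i j) + Ktilde (u (i-1) j)) / Δx^2) =
        ((a + (i:ℝ)*Δx)^k * Gbar i (j+1) - (a + (i:ℝ)*Δx)^k * Gbar i j) / Δt +
        (F (i+1) j - F i j) / Δx := by
  refine ⟨fun i j => -(ρ j) *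
      ((a + ((i:ℝ)-1)*Δx)^k * Ktilde (u i j)
        - (a + (i:ℝ)*Δx)^k * Ktilde (u (i-1) j)) / Δx, fun i j => ?_⟩
  have key : (a + ((i:ℝ)+1)*Δx)^k + (a + ((i:ℝ)-1)*Δx)^k = 2 * (a + (i:ℝ)*Δx)^k := by
    interval_cases k <;> ring
  have hGd : Gbar i (j+1) - Gbar i j = Δt * (ρ j * Dα i j) := by
    rw [hG i j]; field_simp
  have hD := hscheme i j
  have hD' : Dα i j * Δx^2 = Ktilde (u (i+1) j) - 2*Ktilde (u i j) + Ktilde (u (i-1) j) := by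
    rw [hD]; field_simp
  simp only [Int.cast_add, Int.cast_one, Int.cast_sub, add_sub_cancel_right]
  have hx2 : Δx ≠ 0 := hΔx.ne'
  have ht2 : Δt ≠ 0 := hΔt.ne'
  have hii : ((i + 1 : ℤ) : ℝ) = (i:ℝ) + 1 := by push_cast; ring
  have hio : ((i + 1 - 1 : ℤ) : ℝ) = (i:ℝ) := by push_cast; ring
  have hG1 : Gbar i (j+1) = Gbar i j + Δt * (ρ j * Dα i j) := by linarith [hGd]
  rw [hG1, hD]
  field_simp
  ring_nf
  linear_combination (-(ρ j * Ktilde (u i j) * Δt)) * key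
end
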